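/- arXiv:1803.00439 — 2 statements merged into one kernel-verified Lean document; each statement's English description precedes it below -/
import Mathlib

section
/- Let L_D be a diagonal matrix with positive diagonal, S a symmetric positive semidefinite matrix with S·1 = 0 and L_D + S invertible, and Γ := L_D(L_D + S)⁻¹L_D. If Γ commutes with the transposition matrix Π_{ij}, then L_D commutes with Π_{ij} (equivalently, the i-th and j-th diagonal entries of L_D are equal) and S commutes with Π_{ij}. -/
open Matrix

/-- The permutation matrix of the transposition swapping coordinates `i` and `j`. -/
def swapMatrix {n : ℕ} (i j : Fin n) : Matrix (Fin n) (Fin n) ℝ :=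
  fun k l => if l = Equiv.swap i j k then 1 else 0

lemma mul_swapMatrix_apply {n : ℕ} (i j : Fin n) (M : Matrix (Fin n) (Fin n) ℝ)
    (k l : Fin n) : (M * swapMatrix i j) k l = M k (Equiv.swap i j l) := by
  rw [Matrix.mul_apply, Finset.sum_eq_single (Equiv.swap i j l)]
  · simp [swapMatrix, Equiv.swap_apply_self]
  · intro m _ hm
    have : l ≠ Equiv.swap i j m := by
      intro h; exact hm (by rw [h, Equiv.swap_apply_self])
    simp [swapMatrix, this]
  · intro h; exact absurd (Finset.mem_univ _) h

lemma swapMatrix_mul_apply {n : ℕ} (i j : Fin n) (M : Matrix (Fin n) (Fin n) ℝ)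
    (k l : Fin n) : (swapMatrix i j * M) k l = M (Equiv.swap i j k) l := by
  rw [Matrix.mul_apply, Finset.sum_eq_single (Equiv.swap i j k)]
  · simp [swapMatrix]
  · intro m _ hm; simp [swapMatrix, hm]
  · intro h; exact absurd (Finset.mem_univ _) h

theorem LD_S_commute_of_Gamma_commutes
    (n : ℕ) (i j : Fin n) (hij : i ≠ j)
    (LD S : Matrix (Fin n) (Fin n) ℝ)
    (hLDdiag : ∀ k l, k ≠ l → LD k l = 0)
    (hLDpos : ∀ k, 0 < LD k k)
    (hS : S.PosSemidef)
    (hS1 : S.mulVec 1 = 0)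
    (hinv : IsUnit (LD + S))
    (hGamma : (LD * (LD + S)⁻¹ * LD) * swapMatrix i j
      = swapMatrix i j * (LD * (LD + S)⁻¹ * LD)) :
    LD * swapMatrix i j = swapMatrix i j * LD ∧
      S * swapMatrix i j = swapMatrix i j * S := by
  set σ := Equiv.swap i j with hσ
  set P := swapMatrix i j with hP
  have hdet : IsUnit (LD + S).det := (Matrix.isUnit_iff_isUnit_det _).mp hinv
  -- LD is a unit
  have hLDeq : LD = Matrix.diagonal (fun k => LD k k) := by
    ext k l
    by_cases h : k = l
    · subst h; simp [Matrix.diagonal]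
    · simp [Matrix.diagonal, h, hLDdiag k l h]
  have hLDunit : IsUnit LD := by
    rw [hLDeq, Matrix.isUnit_iff_isUnit_det, Matrix.det_diagonal]
    exact isUnit_iff_ne_zero.mpr
      (Finset.prod_ne_zero_iff.mpr fun k _ => (hLDpos k).ne')
  -- P.mulVec 1 = 1
  have hP1 : P.mulVec (1 : Fin n → ℝ) = 1 := by
    ext k
    simp [Matrix.mulVec, dotProduct, swapMatrix, hP]
  -- (LD+S).mulVec 1 = LD.mulVec 1
  have hA1 : (LD + S).mulVec (1 : Fin n → ℝ) = LD.mulVec 1 := by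
    rw [Matrix.add_mulVec, hS1, add_zero]
  have hΓ1 : (LD * (LD + S)⁻¹ * LD).mulVec (1 : Fin n → ℝ) = LD.mulVec 1 := by
    rw [← Matrix.mulVec_mulVec, ← hA1, Matrix.mulVec_mulVec, mul_assoc,
      Matrix.nonsing_inv_mul _ hdet, mul_one]
    exact hA1.symm
  -- equal diagonal entries
  have hdij : LD i i = LD j j := by
    have h : (LD * (LD + S)⁻¹ * LD).mulVec (P.mulVec (1 : Fin n → ℝ))
        = P.mulVec ((LD * (LD + S)⁻¹ * LD).mulVec 1) := by
      rw [Matrix.mulVec_mulVec, Matrix.mulVec_mulVec, hGamma]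
    rw [hP1, hΓ1] at h
    have h2 := congrFun h i
    have hvi : LD.mulVec (1 : Fin n → ℝ) i = LD i i := by
      simp only [Matrix.mulVec, dotProduct, Pi.one_apply, mul_one]
      rw [Finset.sum_eq_single i]
      · intro m _ hm; exact hLDdiag i m (Ne.symm hm)
      · intro h; exact absurd (Finset.mem_univ _) h
    have hvj : P.mulVec (LD.mulVec (1 : Fin n → ℝ)) i = LD j j := by
      simp only [Matrix.mulVec, dotProduct, swapMatrix, hP]
      rw [Finset.sum_eq_single j]
      · rw [if_pos (Equiv.swap_apply_left i j).symm, one_mul]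
        simp only [Matrix.mulVec, dotProduct, Pi.one_apply, mul_one]
        rw [Finset.sum_eq_single j]
        · intro m _ hm; exact hLDdiag j m (Ne.symm hm)
        · intro h; exact absurd (Finset.mem_univ _) h
      · intro m _ hm
        rw [if_neg (by rw [Equiv.swap_apply_left]; exact hm), zero_mul]
      · intro h; exact absurd (Finset.mem_univ _) h
    rw [hvi, hvj] at h2
    exact h2
  -- first goal
  have goal1 : LD * P = P * LD := by
    ext k l
    rw [mul_swapMatrix_apply, swapMatrix_mul_apply]
    by_cases hk : k = σ l
    · subst hk
      rw [show σ (σ l) = l from Equiv.swap_apply_self _ _ _]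
      by_cases hl : l = i
      · subst hl; rw [hσ, Equiv.swap_apply_left]; exact hdij.symm ▸ rfl
      · by_cases hl2 : l = j
        · subst hl2; rw [hσ, Equiv.swap_apply_right]; exact hdij ▸ rfl
        · rw [hσ, Equiv.swap_apply_of_ne_of_ne hl hl2]
    · have hk2 : σ k ≠ l := by
        intro h; exact hk (by rw [← h, Equiv.swap_apply_self])
      rw [hLDdiag k (σ l) hk, hLDdiag (σ k) l hk2]
  refine ⟨goal1, ?_⟩
  -- second goal
  have hAA : (LD + S) * (LD + S)⁻¹ = 1 := Matrix.mul_nonsing_inv _ hdet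
  have hAA' : (LD + S)⁻¹ * (LD + S) = 1 := Matrix.nonsing_inv_mul _ hdet
  have hinvcomm : (LD + S)⁻¹ * P = P * (LD + S)⁻¹ := by
    have h1 : LD * ((LD + S)⁻¹ * P * LD) = LD * (P * (LD + S)⁻¹ * LD) := by
      calc LD * ((LD + S)⁻¹ * P * LD)
          = LD * (LD + S)⁻¹ * LD * P := by
            simp only [← mul_assoc]
            rw [mul_assoc (LD * (LD + S)⁻¹) P LD, ← goal1, ← mul_assoc]
        _ = P * (LD * (LD + S)⁻¹ * LD) := hGamma
        _ = LD * (P * (LD + S)⁻¹ * LD) := by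
            simp only [← mul_assoc]
            rw [goal1]
    have h2 := hLDunit.mul_left_cancel h1
    exact hLDunit.mul_right_cancel h2
  have hAcomm : (LD + S) * P = P * (LD + S) := by
    have h1 : (LD + S) * ((LD + S)⁻¹ * P) * (LD + S)
        = (LD + S) * (P * (LD + S)⁻¹) * (LD + S) := by rw [hinvcomm]
    rw [← mul_assoc, hAA, one_mul, mul_assoc, mul_assoc, hAA', mul_one] at h1
    exact h1.symm
  have : LD * P + S * P = P * LD + P * S := by
    rw [← add_mul, ← mul_add, hAcomm]
  rw [goal1] at this
  exact add_left_cancel this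
end

section
/- For vectors δ, E ∈ ℝⁿ constant on the clusters of a partition (δ = Pδ̂, E = PÊ) and a matrix Γ commuting with Π_{ij}, the vector (Γ ∘ EEᵀ ∘ sin(δ1ᵀ − 1δᵀ))·1 lies in X_{ij}, where ∘ denotes the Hadamard product and sin is applied entrywise. -/
open Matrix

lemma swap_entry {n : ℕ} (i j : Fin n) (Γ : Matrix (Fin n) (Fin n) ℝ)
    (hΓ : Γ * swapMatrix i j = swapMatrix i j * Γ) (k l : Fin n) :
    Γ k (Equiv.swap i j l) = Γ (Equiv.swap i j k) l := by
  have h := congrFun (congrFun hΓ k) l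
  simp only [Matrix.mul_apply, swapMatrix] at h
  have h1 : (∑ m, Γ k m * if l = Equiv.swap i j m then 1 else 0)
      = Γ k (Equiv.swap i j l) := by
    rw [Finset.sum_eq_single (Equiv.swap i j l)]
    · simp
    · intro b _ hb
      have : l ≠ Equiv.swap i j b := by
        intro hh; apply hb; rw [hh]; simp
      simp [this]
    · simp
  have h2 : (∑ m, (if m = Equiv.swap i j k then 1 else 0) * Γ m l)
      = Γ (Equiv.swap i j k) l := by
    rw [Finset.sum_eq_single (Equiv.swap i j k)] <;> simp +contextual
  rw [h1, h2] at h
  exact h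

theorem coupling_term_in_Xij
    (n : ℕ) (i j : Fin n) (hij : i ≠ j)
    (Γ : Matrix (Fin n) (Fin n) ℝ)
    (hΓ : Γ * swapMatrix i j = swapMatrix i j * Γ)
    (δ E : Fin n → ℝ) (hδ : δ i = δ j) (hE : E i = E j) :
    (∑ l, Γ i l * (E i * E l) * Real.sin (δ i - δ l))
      = ∑ l, Γ j l * (E j * E l) * Real.sin (δ j - δ l) := by
  rw [← Equiv.sum_comp (Equiv.swap i j) (fun l => Γ i l * (E i * E l) * Real.sin (δ i - δ l))]
  apply Finset.sum_congr rfl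
  intro l _
  have hΓe : Γ i (Equiv.swap i j l) = Γ j l := by
    rw [swap_entry i j Γ hΓ i l, Equiv.swap_apply_left]
  have hEe : E (Equiv.swap i j l) = E l := by
    rcases eq_or_ne l i with rfl | hi
    · simp [Equiv.swap_apply_left, hE]
    rcases eq_or_ne l j with rfl | hj
    · simp [Equiv.swap_apply_right, hE]
    · rw [Equiv.swap_apply_of_ne_of_ne hi hj]
  have hδe : δ (Equiv.swap i j l) = δ l := by
    rcases eq_or_ne l i with rfl | hi
    · simp [Equiv.swap_apply_left, hδ]
    rcases eq_or_ne l j with rfl | hj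
    · simp [Equiv.swap_apply_right, hδ]
    · rw [Equiv.swap_apply_of_ne_of_ne hi hj]
  rw [hΓe, hEe, hδe, hE, hδ]
end
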